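/- arXiv:2512.01673 — 6 statements merged into one kernel-verified Lean document; each statement's English description precedes it below -/
import Mathlib

section
/- Let G be a simple graph on n vertices and 0 ≤ α ≤ 1. Then α·Δ(G) ≤ λ_α(G) ≤ α·Δ(G) + (1-α)·λ(G), where Δ(G) is the maximum degree, λ(G) is the largest eigenvalue of the adjacency matrix A(G), and λ_α(G) is the largest eigenvalue of A_α(G) = α·D(G) + (1-α)·A(G) with D(G) the diagonal degree matrix. -/
open Finset Matrix

noncomputable def Aalpha {V : Type*} [Fintype V] [DecidableEq V]
    (G : SimpleGraph V) [DecidableRel G.Adj] (α : ℝ) : Matrix V V ℝ :=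
  α • Matrix.diagonal (fun v => (G.degree v : ℝ)) + (1 - α) • G.adjMatrix ℝ

noncomputable def lamAlpha {V : Type*} [Fintype V] [DecidableEq V]
    (G : SimpleGraph V) [DecidableRel G.Adj] (α : ℝ) : ℝ :=
  sSup (spectrum ℝ (Aalpha G α))

/-!
In the Loewner order, a Hermitian matrix `M` satisfies `M ≤ r • 1` exactly when every eigenvalue
of `M` is at most `r`, so its largest eigenvalue is the least such `r`. Since `D ≤ Δ • 1` and
`A ≤ λ(G) • 1`, the combination `A_α = α D + (1 - α) A` lies below `(α Δ + (1 - α) λ(G)) • 1`.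
Conversely `M ≤ λ_max(M) • 1` bounds each diagonal entry of `M`, and the diagonal entry of `A_α`
at a vertex of maximum degree is `α Δ`.
-/

open scoped MatrixOrder

namespace Matrix

variable {ι : Type*} [Fintype ι] [DecidableEq ι] {M : Matrix ι ι ℝ}

theorem IsHermitian.le_algebraMap_sSup_spectrum (hM : M.IsHermitian) :
    M ≤ algebraMap ℝ _ (sSup (spectrum ℝ M)) :=
  (le_algebraMap_iff_spectrum_le hM.isSelfAdjoint).mpr fun _ hx ↦
    le_csSup finite_real_spectrum.bddAbove hx

theorem IsHermitian.sSup_spectrum_le [Nonempty ι] (hM : M.IsHermitian) {r : ℝ}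
    (h : M ≤ algebraMap ℝ _ r) : sSup (spectrum ℝ M) ≤ r := by
  have hne : (spectrum ℝ M).Nonempty := by
    rw [hM.spectrum_real_eq_range_eigenvalues]
    exact Set.range_nonempty _
  exact csSup_le hne ((le_algebraMap_iff_spectrum_le hM.isSelfAdjoint).mp h)

theorem IsHermitian.apply_self_le_sSup_spectrum (hM : M.IsHermitian) (i : ι) :
    M i i ≤ sSup (spectrum ℝ M) := by
  simpa [algebraMap_eq_diagonal] using
    (le_iff.mp hM.le_algebraMap_sSup_spectrum).diag_nonneg (i := i)

end Matrix

namespace SimpleGraph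

variable {V : Type*} [Fintype V] [DecidableEq V] (G : SimpleGraph V) [DecidableRel G.Adj]

theorem Aalpha_def (α : ℝ) : Aalpha G α = α • G.degMatrix ℝ + (1 - α) • G.adjMatrix ℝ :=
  rfl

theorem isHermitian_Aalpha (α : ℝ) : (Aalpha G α).IsHermitian := by
  rw [Aalpha_def]
  exact ((G.isHermitian_degMatrix ℝ).smul (.all α)).add
    ((G.isHermitian_adjMatrix ℝ).smul (.all (1 - α)))

theorem Aalpha_zero : Aalpha G 0 = G.adjMatrix ℝ := by
  simp [Aalpha_def]

theorem Aalpha_apply_self (α : ℝ) (v : V) : Aalpha G α v v = α * G.degree v := by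
  simp [Aalpha_def, degMatrix]

theorem degMatrix_le_maxDegree : G.degMatrix ℝ ≤ algebraMap ℝ _ (G.maxDegree : ℝ) := by
  rw [le_iff, algebraMap_eq_diagonal, degMatrix, diagonal_sub, posSemidef_diagonal_iff]
  intro v
  simpa using G.degree_le_maxDegree v

end SimpleGraph

open SimpleGraph in
theorem alpha_maxDegree_le_lamAlpha_le {n : ℕ} (hn : 1 ≤ n)
    (G : SimpleGraph (Fin n)) [DecidableRel G.Adj]
    (α : ℝ) (h0 : 0 ≤ α) (h1 : α ≤ 1) :
    α * (G.maxDegree : ℝ) ≤ lamAlpha G α ∧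
      lamAlpha G α ≤ α * (G.maxDegree : ℝ) + (1 - α) * lamAlpha G 0 := by
  have : Nonempty (Fin n) := ⟨⟨0, hn⟩⟩
  constructor
  · obtain ⟨v, hv⟩ := G.exists_maximal_degree_vertex
    rw [hv, ← Aalpha_apply_self]
    exact (isHermitian_Aalpha G α).apply_self_le_sSup_spectrum v
  · have hA : G.adjMatrix ℝ ≤ algebraMap ℝ _ (lamAlpha G 0) := by
      rw [lamAlpha, Aalpha_zero]
      exact (G.isHermitian_adjMatrix ℝ).le_algebraMap_sSup_spectrum
    refine (isHermitian_Aalpha G α).sSup_spectrum_le ?_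
    rw [Aalpha_def, map_add, map_mul, map_mul, ← Algebra.smul_def, ← Algebra.smul_def]
    exact add_le_add (smul_le_smul_of_nonneg_left G.degMatrix_le_maxDegree h0)
      (smul_le_smul_of_nonneg_left hA (sub_nonneg.mpr h1))
end

section
/- Let G be a simple graph on n ≥ 1 vertices and 0 ≤ α ≤ 1. Then λ_α(G) ≥ sqrt((1/n)·Σ_{u ∈ V(G)} d(u)^2), where d(u) is the degree of u and λ_α(G) is the largest eigenvalue of A_α(G) = α·D(G) + (1-α)·A(G). -/
open Finset Matrix

/-- Quadratic form of a unitary conjugation of a diagonal matrix. -/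
lemma quad_decomp {ι : Type*} [Fintype ι] [DecidableEq ι]
    (U : Matrix ι ι ℝ) (f : ι → ℝ) (x : ι → ℝ) :
    x ⬝ᵥ (U * Matrix.diagonal f * star U) *ᵥ x = ∑ i, f i * (x ᵥ* U) i ^ 2 := by
  have hstar : star U *ᵥ x = x ᵥ* U := by
    ext i
    simp [Matrix.mulVec, Matrix.vecMul, dotProduct, Matrix.star_apply, mul_comm]
  rw [← Matrix.mulVec_mulVec, ← Matrix.mulVec_mulVec, dotProduct_mulVec, hstar]
  simp only [dotProduct, Matrix.mulVec_diagonal]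
  exact Finset.sum_congr rfl fun i _ => by ring

lemma quad_eigen {ι : Type*} [Fintype ι] [DecidableEq ι] {A : Matrix ι ι ℝ}
    (hA : A.IsHermitian) (x : ι → ℝ) :
    ∃ c : ι → ℝ,
      x ⬝ᵥ x = ∑ i, c i ^ 2 ∧
      x ⬝ᵥ A *ᵥ x = ∑ i, hA.eigenvalues i * c i ^ 2 ∧
      x ⬝ᵥ (A * A) *ᵥ x = ∑ i, hA.eigenvalues i ^ 2 * c i ^ 2 := by
  set U := (hA.eigenvectorUnitary : Matrix ι ι ℝ) with hU
  have hspec : A = U * Matrix.diagonal hA.eigenvalues * star U := by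
    have := hA.spectral_theorem
    simpa [RCLike.ofReal_real_eq_id] using this
  have hUU : U * star U = 1 := Matrix.mem_unitaryGroup_iff.mp hA.eigenvectorUnitary.2
  refine ⟨x ᵥ* U, ?_, ?_, ?_⟩
  · have h1 : (1 : Matrix ι ι ℝ) = U * Matrix.diagonal (fun _ => (1:ℝ)) * star U := by
      rw [Matrix.diagonal_one, mul_one, hUU]
    calc x ⬝ᵥ x = x ⬝ᵥ (1 : Matrix ι ι ℝ) *ᵥ x := by rw [Matrix.one_mulVec]
      _ = ∑ i, (x ᵥ* U) i ^ 2 := by rw [h1, quad_decomp]; simp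
  · conv_lhs => rw [hspec]
    exact quad_decomp U hA.eigenvalues x
  · have hAA : A * A = U * Matrix.diagonal (fun i => hA.eigenvalues i ^ 2) * star U := by
      conv_lhs => rw [hspec]
      have : Matrix.diagonal hA.eigenvalues * Matrix.diagonal hA.eigenvalues
          = Matrix.diagonal (fun i => hA.eigenvalues i ^ 2) := by
        rw [Matrix.diagonal_mul_diagonal]
        congr 1
        ext i
        ring
      calc (U * Matrix.diagonal hA.eigenvalues * star U) *
            (U * Matrix.diagonal hA.eigenvalues * star U)
          = U * (Matrix.diagonal hA.eigenvalues * ((star U * U) *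
              (Matrix.diagonal hA.eigenvalues * star U))) := by
            simp only [Matrix.mul_assoc]
        _ = U * Matrix.diagonal (fun i => hA.eigenvalues i ^ 2) * star U := by
            rw [Matrix.mem_unitaryGroup_iff'.mp hA.eigenvectorUnitary.2, one_mul,
              Matrix.mul_assoc, ← Matrix.mul_assoc (Matrix.diagonal hA.eigenvalues), this,
              ← Matrix.mul_assoc]
    rw [hAA]
    exact quad_decomp U _ x

theorem lamAlpha_ge_sqrt_mean_sq_degree {n : ℕ} (hn : 1 ≤ n)
    (G : SimpleGraph (Fin n)) [DecidableRel G.Adj]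
    (α : ℝ) (h0 : 0 ≤ α) (h1 : α ≤ 1) :
    Real.sqrt ((1 / n) * ∑ u : Fin n, (G.degree u : ℝ) ^ 2) ≤ lamAlpha G α := by
  classical
  set A := Aalpha G α with hAdef
  have hnpos : (0:ℝ) < n := by exact_mod_cast hn
  -- A is symmetric
  have hA : A.IsHermitian := by
    rw [Matrix.IsHermitian, Matrix.conjTranspose_eq_transpose_of_trivial]
    ext i j
    simp only [hAdef, Aalpha, Matrix.transpose_apply, Matrix.add_apply, Matrix.smul_apply,
      Matrix.diagonal_apply, SimpleGraph.adjMatrix_apply, smul_eq_mul]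
    rcases eq_or_ne i j with h | h
    · subst h; rfl
    · simp [h, h.symm, G.adj_comm i j]
  -- entries of A are nonnegative
  have hA0 : ∀ i j, 0 ≤ A i j := by
    intro i j
    simp only [hAdef, Aalpha, Matrix.add_apply, Matrix.smul_apply, Matrix.diagonal_apply,
      SimpleGraph.adjMatrix_apply, smul_eq_mul]
    have h1' : (0:ℝ) ≤ 1 - α := by linarith
    apply add_nonneg
    · split_ifs with h
      · positivity
      · simp
    · split_ifs with h
      · simpa using h1'
      · simp
  -- the maximal eigenvalue
  have hne : (Finset.univ (α := Fin n)).Nonempty := ⟨⟨0, hn⟩, Finset.mem_univ _⟩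
  obtain ⟨i₀, -, hi₀⟩ := Finset.exists_max_image Finset.univ hA.eigenvalues hne
  set M := hA.eigenvalues i₀ with hMdef
  have hMle : M ≤ lamAlpha G α := by
    refine le_csSup (Matrix.finite_spectrum A).bddAbove ?_
    exact hA.eigenvalues_mem_spectrum_real i₀
  -- Rayleigh upper bound
  have hray : ∀ x : Fin n → ℝ, x ⬝ᵥ A *ᵥ x ≤ M * (x ⬝ᵥ x) := by
    intro x
    obtain ⟨c, hc1, hc2, -⟩ := quad_eigen hA x
    rw [hc2, hc1, Finset.mul_sum]
    exact Finset.sum_le_sum fun i _ =>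
      mul_le_mul_of_nonneg_right (hi₀ i (Finset.mem_univ i)) (sq_nonneg _)
  -- M is nonnegative
  have hM0 : 0 ≤ M := by
    have h11 : (0:ℝ) ≤ (fun _ => (1:ℝ)) ⬝ᵥ A *ᵥ (fun _ => (1:ℝ)) := by
      simp only [dotProduct, Matrix.mulVec, one_mul]
      exact Finset.sum_nonneg fun j _ => Finset.sum_nonneg fun k _ => by
        simpa using mul_nonneg (hA0 j k) zero_le_one
    have h12 := hray (fun _ => 1)
    have h13 : (fun _ : Fin n => (1:ℝ)) ⬝ᵥ (fun _ : Fin n => (1:ℝ)) = (n:ℝ) := by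
      simp [dotProduct]
    rw [h13] at h12
    nlinarith
  -- all eigenvalues are bounded by M in absolute value
  have habs : ∀ i, |hA.eigenvalues i| ≤ M := by
    intro i
    set v : Fin n → ℝ := ⇑(hA.eigenvectorBasis i) with hvdef
    have hv : A *ᵥ v = hA.eigenvalues i • v := hA.mulVec_eigenvectorBasis i
    have hnorm : ∑ j : Fin n, v j ^ 2 = 1 := by
      have h := hA.eigenvectorBasis.orthonormal.1 i
      have h2 : (inner ℝ (hA.eigenvectorBasis i) (hA.eigenvectorBasis i) : ℝ) = 1 := by
        rw [real_inner_self_eq_norm_sq, h, one_pow]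
      have h5 : (inner ℝ (hA.eigenvectorBasis i) (hA.eigenvectorBasis i) : ℝ)
          = ∑ j : Fin n, v j ^ 2 := by
        rw [PiLp.inner_apply]
        exact Finset.sum_congr rfl fun j _ => by
          simp only [RCLike.inner_apply, conj_trivial, sq]
          rfl
      rw [← h5]
      exact h2
    set w : Fin n → ℝ := fun j => |v j| with hwdef
    have hw : ∑ j, w j ^ 2 = 1 := by
      simpa [hwdef, sq_abs] using hnorm
    have hlam : hA.eigenvalues i = v ⬝ᵥ A *ᵥ v := by
      rw [hv]
      have : v ⬝ᵥ (hA.eigenvalues i • v) = hA.eigenvalues i * ∑ j, v j ^ 2 := by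
        simp only [dotProduct, Pi.smul_apply, smul_eq_mul, Finset.mul_sum]
        exact Finset.sum_congr rfl fun j _ => by ring
      rw [this, hnorm, mul_one]
    have habs1 : |v ⬝ᵥ A *ᵥ v| ≤ w ⬝ᵥ A *ᵥ w := by
      simp only [dotProduct, Matrix.mulVec]
      calc |∑ j, v j * ∑ k, A j k * v k| ≤ ∑ j, |v j * ∑ k, A j k * v k| :=
            Finset.abs_sum_le_sum_abs _ _
        _ ≤ ∑ j, w j * ∑ k, A j k * w k := by
            apply Finset.sum_le_sum
            intro j _
            rw [abs_mul]
            refine mul_le_mul_of_nonneg_left ?_ (abs_nonneg _)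
            calc |∑ k, A j k * v k| ≤ ∑ k, |A j k * v k| := Finset.abs_sum_le_sum_abs _ _
              _ = ∑ k, A j k * w k := Finset.sum_congr rfl fun k _ => by
                  rw [abs_mul, abs_of_nonneg (hA0 j k)]
    have hww : w ⬝ᵥ w = 1 := by
      simpa [dotProduct, ← sq] using hw
    calc |hA.eigenvalues i| = |v ⬝ᵥ A *ᵥ v| := by rw [hlam]
      _ ≤ w ⬝ᵥ A *ᵥ w := habs1
      _ ≤ M * (w ⬝ᵥ w) := hray w
      _ = M := by rw [hww, mul_one]
  -- A applied to the all-ones vector is the degree vector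
  have hd : A *ᵥ (fun _ => (1:ℝ)) = fun v => (G.degree v : ℝ) := by
    ext v
    simp only [hAdef, Aalpha, Matrix.add_mulVec, Matrix.smul_mulVec, Pi.add_apply,
      Pi.smul_apply, smul_eq_mul]
    rw [Matrix.mulVec_diagonal, SimpleGraph.adjMatrix_mulVec_apply]
    have hsum : ∑ u ∈ G.neighborFinset v, (1:ℝ) = (G.degree v : ℝ) := by
      rw [Finset.sum_const, nsmul_eq_mul, mul_one]
      rfl
    rw [hsum]
    ring
  -- the quadratic form of A² at the all-ones vector is the sum of squared degrees
  have hAt : Aᵀ = A := by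
    rw [← Matrix.conjTranspose_eq_transpose_of_trivial, hA]
  have hS : (fun _ => (1:ℝ)) ⬝ᵥ (A * A) *ᵥ (fun _ => (1:ℝ))
      = ∑ u, (G.degree u : ℝ) ^ 2 := by
    rw [← Matrix.mulVec_mulVec, hd, dotProduct_mulVec, ← Matrix.mulVec_transpose, hAt, hd]
    exact Finset.sum_congr rfl fun u _ => by ring
  -- key estimate
  obtain ⟨c, hc1, -, hc3⟩ := quad_eigen hA (fun _ => (1:ℝ))
  have h11n : (fun _ : Fin n => (1:ℝ)) ⬝ᵥ (fun _ : Fin n => (1:ℝ)) = (n:ℝ) := by simp [dotProduct]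
  rw [h11n] at hc1
  have hkey : ∑ u, (G.degree u : ℝ) ^ 2 ≤ M ^ 2 * n := by
    rw [← hS, hc3]
    calc ∑ i, hA.eigenvalues i ^ 2 * c i ^ 2 ≤ ∑ i, M ^ 2 * c i ^ 2 := by
          apply Finset.sum_le_sum
          intro i _
          refine mul_le_mul_of_nonneg_right ?_ (sq_nonneg _)
          have := habs i
          have h' := abs_le.mp this
          nlinarith [h'.1, h'.2]
      _ = M ^ 2 * ∑ i, c i ^ 2 := by rw [Finset.mul_sum]
      _ = M ^ 2 * n := by rw [← hc1]
  have hfrac : (1 / (n:ℝ)) * ∑ u, (G.degree u : ℝ) ^ 2 ≤ M ^ 2 := by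
    rw [div_mul_eq_mul_div, one_mul, div_le_iff₀ hnpos]
    linarith
  calc Real.sqrt ((1 / (n:ℝ)) * ∑ u, (G.degree u : ℝ) ^ 2)
      ≤ Real.sqrt (M ^ 2) := Real.sqrt_le_sqrt hfrac
    _ = M := by rw [Real.sqrt_sq hM0]
    _ ≤ lamAlpha G α := hMle
end

section
/- Let r ≥ 2, 0 ≤ α ≤ 1 - 1/r, and let G be a simple graph on n vertices. Let x = (x_1, …, x_n) be a non-negative unit eigenvector of A_α(G) corresponding to λ_α(G), and let w be a vertex with x_w = min{x_1, …, x_n}. Then λ_α(G - w) ≥ λ_α(G)·(1 - 2x_w²)/(1 - x_w²) - α·(1 - n·x_w²)/(1 - x_w²). -/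
open Finset Matrix

instance {V : Type*} (G : SimpleGraph V) [DecidableRel G.Adj] (s : Set V) :
    DecidableRel (G.induce s).Adj := fun a b =>
  inferInstanceAs (Decidable (G.Adj a.1 b.1))

/-!
Restricting `x` to `G - w` gives a test vector `y` with `‖y‖² = 1 - x_w²`. Deleting `w` removes
from `x ⬝ A_α(G) x = λ` the terms of the edges at `w`; by the eigenvalue equation at `w` these add
up to `2 λ x_w² + α ∑_{v ∼ w} (x_v² - x_w²)`, and the last sum is at most
`∑_v (x_v² - x_w²) = 1 - n x_w²` since `x_w` is the minimal coordinate. The Rayleigh bound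
`y ⬝ A_α(G - w) y ≤ λ_α(G - w) ‖y‖²` finishes the proof.
-/

theorem Matrix.IsHermitian.dotProduct_mulVec_le_sSup_spectrum_mul {ι : Type*} [Fintype ι]
    [DecidableEq ι] {M : Matrix ι ι ℝ} (hM : M.IsHermitian) (y : ι → ℝ) :
    y ⬝ᵥ M *ᵥ y ≤ sSup (spectrum ℝ M) * (y ⬝ᵥ y) := by
  set c := sSup (spectrum ℝ M)
  have hpsd : (algebraMap ℝ _ c - M).PosSemidef := by
    refine posSemidef_iff_isHermitian_and_spectrum_nonneg.2 ⟨?_, ?_⟩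
    · exact (isHermitian_diagonal _).sub hM
    · rw [← spectrum.singleton_sub_eq]
      rintro _ ⟨_, rfl, ν, hν, rfl⟩
      exact sub_nonneg.2 (le_csSup M.finite_spectrum.bddAbove hν)
  have := hpsd.dotProduct_mulVec_nonneg y
  simp only [star_trivial, sub_mulVec, dotProduct_sub, Algebra.algebraMap_eq_smul_one,
    smul_mulVec, one_mulVec, dotProduct_smul, smul_eq_mul] at this
  linarith

theorem Fintype.sum_setOf_ne_eq_sub {V M : Type*} [Fintype V] [DecidableEq V] [AddCommGroup M]
    (f : V → M) (w : V) : ∑ v : {v | v ≠ w}, f v = ∑ v, f v - f w := by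
  rw [Fintype.sum_eq_add_sum_subtype_ne f w, add_sub_cancel_left]
  rfl

section
variable {V : Type*} [Fintype V] [DecidableEq V] (G : SimpleGraph V) [DecidableRel G.Adj]
  (α : ℝ)

theorem Aalpha_isHermitian : (Aalpha G α).IsHermitian :=
  ((isHermitian_diagonal _).smul (.all α)).add ((G.isHermitian_adjMatrix ℝ).smul (.all _))

theorem Aalpha_mulVec_apply (z : V → ℝ) (u : V) :
    (Aalpha G α *ᵥ z) u = ∑ v ∈ G.neighborFinset u, (α * z u + (1 - α) * z v) := by
  simp only [Aalpha, add_mulVec, smul_mulVec, Pi.add_apply, Pi.smul_apply, smul_eq_mul,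
    mulVec_diagonal, SimpleGraph.adjMatrix_mulVec_apply, sum_add_distrib, ← mul_sum,
    sum_const, nsmul_eq_mul, SimpleGraph.card_neighborFinset_eq_degree]

theorem Aalpha_induce_ne_mulVec_apply (z : V → ℝ) (w : V) (u : {v | v ≠ w}) :
    (Aalpha (G.induce {v | v ≠ w}) α *ᵥ fun v => z v) u
      = (Aalpha G α *ᵥ z) u - if G.Adj u w then α * z u + (1 - α) * z w else 0 := by
  simp only [Aalpha_mulVec_apply, SimpleGraph.neighborFinset_eq_filter, sum_filter,
    SimpleGraph.comap_adj, Function.Embedding.coe_subtype]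
  rw [Fintype.sum_setOf_ne_eq_sub (fun v => if G.Adj u v then α * z u + (1 - α) * z v else 0)]

theorem dotProduct_Aalpha_induce_ne_mulVec (z : V → ℝ) (w : V) :
    (fun v : {v | v ≠ w} => z v) ⬝ᵥ Aalpha (G.induce {v | v ≠ w}) α *ᵥ (fun v => z v)
      = z ⬝ᵥ Aalpha G α *ᵥ z - 2 * z w * (Aalpha G α *ᵥ z) w
        - α * ∑ v ∈ G.neighborFinset w, (z v ^ 2 - z w ^ 2) := by
  have hcross : ∑ u, z u * (if G.Adj u w then α * z u + (1 - α) * z w else 0)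
      = z w * (Aalpha G α *ᵥ z) w + α * ∑ v ∈ G.neighborFinset w, (z v ^ 2 - z w ^ 2) := by
    simp only [Aalpha_mulVec_apply, mul_sum, ← sum_add_distrib,
      SimpleGraph.neighborFinset_eq_filter, sum_filter]
    refine sum_congr rfl fun v _ => ?_
    by_cases h : G.Adj w v
    · simp only [h, h.symm, if_true]; ring
    · simp [h, mt G.adj_symm h]
  simp only [dotProduct, Aalpha_induce_ne_mulVec_apply, mul_sub]
  rw [Fintype.sum_setOf_ne_eq_sub (fun u => z u * (Aalpha G α *ᵥ z) u
    - z u * if G.Adj u w then α * z u + (1 - α) * z w else 0)]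
  simp only [G.irrefl, if_false, mul_zero, sub_zero, sum_sub_distrib, hcross]
  ring

end

theorem lamAlpha_delete_min_vertex_general {n : ℕ} (hn : 2 ≤ n)
    (G : SimpleGraph (Fin n)) [DecidableRel G.Adj]
    (α : ℝ) (h0 : 0 ≤ α)
    (x : Fin n → ℝ) (hxnn : ∀ v, 0 ≤ x v) (hunit : ∑ v, x v ^ 2 = 1)
    (heig : (Aalpha G α).mulVec x = lamAlpha G α • x)
    (w : Fin n) (hw : ∀ v, x w ≤ x v) :
    lamAlpha (G.induce {v | v ≠ w}) α ≥
      lamAlpha G α * (1 - 2 * x w ^ 2) / (1 - x w ^ 2)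
        - α * (1 - n * x w ^ 2) / (1 - x w ^ 2) := by
  have hsq (v : Fin n) : 0 ≤ x v ^ 2 - x w ^ 2 :=
    sub_nonneg.2 (pow_le_pow_left₀ (hxnn w) (hw v) 2)
  have hgap : ∑ v, (x v ^ 2 - x w ^ 2) = 1 - n * x w ^ 2 := by
    simp [sum_sub_distrib, hunit]
  have hden : 0 < 1 - x w ^ 2 := by
    have : 0 ≤ 1 - n * x w ^ 2 := hgap ▸ sum_nonneg fun v _ => hsq v
    have : (2 : ℝ) ≤ n := by exact_mod_cast hn
    nlinarith [sq_nonneg (x w)]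
  have hnbr : ∑ v ∈ G.neighborFinset w, (x v ^ 2 - x w ^ 2) ≤ 1 - n * x w ^ 2 :=
    hgap ▸ sum_le_sum_of_subset_of_nonneg (subset_univ _) fun v _ _ => hsq v
  have hxx : x ⬝ᵥ x = 1 := by simpa [dotProduct, sq] using hunit
  have hyy : (fun v : {v | v ≠ w} => x v) ⬝ᵥ (fun v => x v) = 1 - x w ^ 2 := by
    simp only [dotProduct, ← sq, Fintype.sum_setOf_ne_eq_sub (fun v => x v ^ 2), hunit]
  have hray := (Aalpha_isHermitian (G.induce {v | v ≠ w}) α)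
    |>.dotProduct_mulVec_le_sSup_spectrum_mul (fun v => x v)
  rw [dotProduct_Aalpha_induce_ne_mulVec, hyy, heig, dotProduct_smul, hxx] at hray
  rw [ge_iff_le, ← sub_div, div_le_iff₀ hden]
  simp only [Pi.smul_apply, smul_eq_mul] at hray
  change _ ≤ lamAlpha _ α * _ at hray
  linarith [mul_le_mul_of_nonneg_left hnbr h0]

theorem lamAlpha_delete_min_vertex {n : ℕ} (hn : 2 ≤ n) (r : ℕ) (hr : 2 ≤ r)
    (G : SimpleGraph (Fin n)) [DecidableRel G.Adj]
    (α : ℝ) (h0 : 0 ≤ α) (h1 : α ≤ 1 - 1 / r)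
    (x : Fin n → ℝ) (hxnn : ∀ v, 0 ≤ x v) (hunit : ∑ v, x v ^ 2 = 1)
    (heig : (Aalpha G α).mulVec x = lamAlpha G α • x)
    (w : Fin n) (hw : ∀ v, x w ≤ x v) :
    lamAlpha (G.induce {v | v ≠ w}) α ≥
      lamAlpha G α * (1 - 2 * x w ^ 2) / (1 - x w ^ 2)
        - α * (1 - n * x w ^ 2) / (1 - x w ^ 2) :=
  lamAlpha_delete_min_vertex_general hn G α h0 x hxnn hunit heig w hw
end

section
/- Let r ≥ 2 and 0 ≤ α ≤ 1 - 1/r. Let G be a simple graph on n vertices with minimum degree δ ≥ 1, and let x = (x_1, …, x_n) be a non-negative unit eigenvector of A_α(G) for λ_α(G). If x_min = min{x_1, …, x_n} > 0, then λ_α(G) ≤ α·δ + (1-α)·sqrt(δ² + (1/(n·x_min²) - 1)·n·δ). -/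
open Finset Matrix

theorem lamAlpha_upper_bound_minDegree {n : ℕ} (r : ℕ) (hr : 2 ≤ r)
    (G : SimpleGraph (Fin n)) [DecidableRel G.Adj]
    (α : ℝ) (h0 : 0 ≤ α) (h1 : α ≤ 1 - 1 / r)
    (hδ : 1 ≤ G.minDegree)
    (x : Fin n → ℝ) (hxnn : ∀ v, 0 ≤ x v) (hunit : ∑ v, x v ^ 2 = 1)
    (heig : (Aalpha G α).mulVec x = lamAlpha G α • x)
    (w : Fin n) (hw : ∀ v, x w ≤ x v) (hwpos : 0 < x w) :
    lamAlpha G α ≤ α * (G.minDegree : ℝ) +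
      (1 - α) * Real.sqrt ((G.minDegree : ℝ) ^ 2 +
        (1 / (n * x w ^ 2) - 1) * n * (G.minDegree : ℝ)) := by
  have hn : 0 < n := w.pos
  haveI : Nonempty (Fin n) := ⟨w⟩
  obtain ⟨u, hu⟩ := G.exists_minimal_degree_vertex
  set δ : ℝ := (G.minDegree : ℝ) with hδdef
  set lam := lamAlpha G α with hlam
  set m := x w with hm
  have hα1 : α ≤ 1 := by
    have : (0:ℝ) ≤ 1 / r := by positivity
    linarith
  have h1α : 0 ≤ 1 - α := by linarith
  have hδ0 : (0:ℝ) ≤ δ := by positivity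
  have hnR : (0:ℝ) < n := by exact_mod_cast hn
  -- degree facts
  have hdegu : (G.degree u : ℝ) = δ := by rw [hδdef, hu]
  have hdlt : G.degree u < n := by
    simpa using G.degree_lt_card_verts u
  -- eigen equation at u
  have hequ : lam * x u = α * δ * x u + (1 - α) * ∑ v ∈ G.neighborFinset u, x v := by
    have h := congrFun heig u
    rw [Aalpha, Matrix.add_mulVec, Matrix.smul_mulVec, Matrix.smul_mulVec] at h
    simp only [Pi.add_apply, Pi.smul_apply, smul_eq_mul, Matrix.mulVec_diagonal,
      SimpleGraph.adjMatrix_mulVec_apply] at h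
    rw [hdegu] at h
    rw [← h]; ring
  set S := ∑ v ∈ G.neighborFinset u, x v with hS
  set A : ℝ := δ * (1 - ((n : ℝ) - δ) * m ^ 2) with hA
  -- sum of squares over neighbors bound
  have hsum2 : ∑ v ∈ G.neighborFinset u, x v ^ 2 ≤ 1 - ((n:ℝ) - δ) * m ^ 2 := by
    have hsplit : ∑ v ∈ G.neighborFinset u, x v ^ 2
        + ∑ v ∈ (G.neighborFinset u)ᶜ, x v ^ 2 = 1 := by
      rw [Finset.sum_add_sum_compl]; exact hunit
    have hcard : (((G.neighborFinset u)ᶜ).card : ℝ) = (n:ℝ) - δ := by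
      rw [Finset.card_compl, G.card_neighborFinset_eq_degree]
      have hle : G.degree u ≤ Fintype.card (Fin n) := by
        simpa using hdlt.le
      rw [Nat.cast_sub hle]
      simp [hdegu]
    have hlb : ((n:ℝ) - δ) * m ^ 2 ≤ ∑ v ∈ (G.neighborFinset u)ᶜ, x v ^ 2 := by
      rw [← hcard]
      have := Finset.card_nsmul_le_sum ((G.neighborFinset u)ᶜ) (fun v => x v ^ 2) (m ^ 2)
        (fun v _ => by simpa using pow_le_pow_left₀ hwpos.le (hw v) 2)
      simpa [nsmul_eq_mul, mul_comm] using this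
    linarith
  have hA0 : 0 ≤ A := by
    have hnn : 0 ≤ ∑ v ∈ G.neighborFinset u, x v ^ 2 :=
      Finset.sum_nonneg fun v _ => sq_nonneg _
    have h2 : (0:ℝ) ≤ 1 - ((n:ℝ) - δ) * m ^ 2 := le_trans hnn hsum2
    rw [hA]; positivity
  -- Cauchy-Schwarz: S ≤ sqrt A
  have hSnn : 0 ≤ S := Finset.sum_nonneg fun v _ => hxnn v
  have hSle : S ≤ Real.sqrt A := by
    rw [Real.le_sqrt hSnn hA0]
    have hcs := sq_sum_le_card_mul_sum_sq (s := G.neighborFinset u) (f := x)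
    have hcard : ((G.neighborFinset u).card : ℝ) = δ := by
      rw [G.card_neighborFinset_eq_degree]; exact hdegu
    calc S ^ 2 ≤ ((G.neighborFinset u).card : ℝ) * ∑ v ∈ G.neighborFinset u, x v ^ 2 := hcs
      _ = δ * ∑ v ∈ G.neighborFinset u, x v ^ 2 := by rw [hcard]
      _ ≤ A := by rw [hA]; exact mul_le_mul_of_nonneg_left hsum2 hδ0
  -- relate sqrt A and sqrt B * m
  set B : ℝ := δ ^ 2 + (1 / ((n:ℝ) * m ^ 2) - 1) * (n:ℝ) * δ with hB
  have hBm : B * m ^ 2 = A := by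
    rw [hB, hA]
    have hm0 : m ≠ 0 := ne_of_gt hwpos
    have hn0 : (n:ℝ) ≠ 0 := ne_of_gt hnR
    field_simp
    ring
  have hB0 : 0 ≤ B := by
    have hm2 : (0:ℝ) < m ^ 2 := by positivity
    nlinarith [hA0, hBm]
  have hsqrtA : Real.sqrt A = Real.sqrt B * m := by
    rw [← hBm, Real.sqrt_mul hB0, Real.sqrt_sq hwpos.le]
  -- main inequality
  have key : lam * m ≤ (α * δ + (1 - α) * Real.sqrt B) * m := by
    have heqr : (α * δ + (1 - α) * Real.sqrt B) * m
        = α * δ * m + (1 - α) * Real.sqrt B * m := by ring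
    rcases le_or_gt lam (α * δ) with hc | hc
    · have h5 : 0 ≤ (1 - α) * Real.sqrt B * m :=
        mul_nonneg (mul_nonneg h1α (Real.sqrt_nonneg B)) hwpos.le
      have h6 : lam * m ≤ α * δ * m := mul_le_mul_of_nonneg_right hc hwpos.le
      rw [heqr]; linarith
    · have h2 : lam * m - α * δ * m ≤ lam * x u - α * δ * x u := by
        calc lam * m - α * δ * m = (lam - α * δ) * m := by ring
          _ ≤ (lam - α * δ) * x u :=
            mul_le_mul_of_nonneg_left (hw u) (by linarith)
          _ = lam * x u - α * δ * x u := by ring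
      have h4 : (1 - α) * S ≤ (1 - α) * Real.sqrt B * m := by
        calc (1 - α) * S ≤ (1 - α) * Real.sqrt A := mul_le_mul_of_nonneg_left hSle h1α
          _ = (1 - α) * Real.sqrt B * m := by rw [hsqrtA]; ring
      rw [heqr]; linarith
  exact le_of_mul_le_mul_right key hwpos
end

section
/- Let G be a simple graph on n vertices with minimum degree δ ≥ 1 and 0 ≤ α < 1. Let x be a non-negative unit eigenvector of A_α(G) corresponding to λ_α(G), and let x_min be the minimum coordinate of x. Then x_min² ≤ δ(1-α)² / ((λ_α(G) - α·δ)² + δ(n-δ)(1-α)²). -/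
/-!
Let `u` be a vertex of minimum degree `δ` and `S` the sum of `x` over its neighbours. The
eigenvalue equation at `u` reads `(λ - αδ) x_u = (1 - α) S`, and `x_min ≤ x_u` gives
`(λ - αδ)² x_min² ≤ (1 - α)² S²`. By Cauchy–Schwarz `S² ≤ δ ∑_{v ∼ u} x_v²`, and since each of the
`n - δ` remaining coordinates has square at least `x_min²`, the unit norm of `x` gives
`∑_{v ∼ u} x_v² ≤ 1 - (n - δ) x_min²`. Rearranging yields the bound.
-/

open Finset Matrix

namespace Finset

theorem sum_le_sum_univ_sub_card_compl_mul {ι : Type*} [Fintype ι] [DecidableEq ι]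
    (s : Finset ι) {f : ι → ℝ} {c : ℝ} (hc : ∀ v, c ≤ f v) :
    ∑ v ∈ s, f v ≤ ∑ v, f v - (Fintype.card ι - #s) * c := by
  have hcompl : (#sᶜ : ℝ) * c ≤ ∑ v ∈ sᶜ, f v := by
    simpa only [nsmul_eq_mul] using sᶜ.card_nsmul_le_sum f c fun v _ => hc v
  rw [card_compl, Nat.cast_sub (card_le_univ s)] at hcompl
  linarith [sum_compl_add_sum s f]

end Finset

namespace SimpleGraph

variable {V : Type*} [Fintype V] [DecidableEq V] (G : SimpleGraph V) [DecidableRel G.Adj]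

theorem Aalpha_mulVec_apply (α : ℝ) (x : V → ℝ) (v : V) :
    (Aalpha G α *ᵥ x) v = α * G.degree v * x v + (1 - α) * ∑ u ∈ G.neighborFinset v, x u := by
  simp only [Aalpha, add_mulVec, smul_mulVec, Pi.add_apply, Pi.smul_apply, smul_eq_mul,
    mulVec_diagonal, adjMatrix_mulVec_apply, mul_assoc]

theorem sub_mul_eq_sum_neighborFinset_of_mulVec_eq {α μ : ℝ} {x : V → ℝ}
    (heig : Aalpha G α *ᵥ x = μ • x) (v : V) :
    (μ - α * G.degree v) * x v = (1 - α) * ∑ u ∈ G.neighborFinset v, x u := by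
  have h := congrFun heig v
  rw [Aalpha_mulVec_apply, Pi.smul_apply, smul_eq_mul] at h
  linarith

theorem sq_sum_neighborFinset_le (u : V) {x : V → ℝ} {c : ℝ} (hc : ∀ v, c ≤ x v ^ 2) :
    (∑ v ∈ G.neighborFinset u, x v) ^ 2 ≤
      G.degree u * (∑ v, x v ^ 2 - (Fintype.card V - G.degree u) * c) := by
  have hcard : (#(G.neighborFinset u) : ℝ) = G.degree u := by
    rw [card_neighborFinset_eq_degree]
  calc (∑ v ∈ G.neighborFinset u, x v) ^ 2
      ≤ #(G.neighborFinset u) * ∑ v ∈ G.neighborFinset u, x v ^ 2 := sq_sum_le_card_mul_sum_sq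
    _ ≤ G.degree u * (∑ v, x v ^ 2 - (Fintype.card V - G.degree u) * c) := by
      rw [← hcard]
      gcongr
      exact sum_le_sum_univ_sub_card_compl_mul _ hc

end SimpleGraph

theorem min_coord_sq_upper_bound_general {n : ℕ}
    (G : SimpleGraph (Fin n)) [DecidableRel G.Adj]
    (α : ℝ) (h1 : α < 1)
    (hδ : 1 ≤ G.minDegree)
    (x : Fin n → ℝ) (hxnn : ∀ v, 0 ≤ x v) (hunit : ∑ v, x v ^ 2 = 1)
    (heig : (Aalpha G α).mulVec x = lamAlpha G α • x)
    (w : Fin n) (hw : ∀ v, x w ≤ x v) :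
    x w ^ 2 ≤ (G.minDegree : ℝ) * (1 - α) ^ 2 /
      ((lamAlpha G α - α * (G.minDegree : ℝ)) ^ 2 +
        (G.minDegree : ℝ) * ((n : ℝ) - (G.minDegree : ℝ)) * (1 - α) ^ 2) := by
  have : Nonempty (Fin n) := ⟨w⟩
  obtain ⟨u, hu⟩ := G.exists_minimal_degree_vertex
  have hsq : ∀ v, x w ^ 2 ≤ x v ^ 2 := fun v => pow_le_pow_left₀ (hxnn w) (hw v) 2
  have heq := G.sub_mul_eq_sum_neighborFinset_of_mulVec_eq heig u
  have hS := G.sq_sum_neighborFinset_le u hsq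
  rw [← hu] at heq hS
  rw [hunit, Fintype.card_fin] at hS
  have hδpos : (0 : ℝ) < G.minDegree := by exact_mod_cast hδ
  have hδn : (G.minDegree : ℝ) < n := by simpa using G.minDegree_lt_card
  set δ : ℝ := (G.minDegree : ℝ)
  set μ := lamAlpha G α
  have hD : 0 < (μ - α * δ) ^ 2 + δ * (n - δ) * (1 - α) ^ 2 := by
    have : 0 < δ * (n - δ) * (1 - α) ^ 2 := by
      have : 0 < 1 - α := by linarith
      positivity
    positivity
  rw [le_div_iff₀' hD]
  calc ((μ - α * δ) ^ 2 + δ * (n - δ) * (1 - α) ^ 2) * x w ^ 2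
      ≤ ((μ - α * δ) * x u) ^ 2 + δ * (n - δ) * (1 - α) ^ 2 * x w ^ 2 := by
        nlinarith [hsq u, sq_nonneg (μ - α * δ)]
    _ = (1 - α) ^ 2 * ((∑ v ∈ G.neighborFinset u, x v) ^ 2 + δ * (n - δ) * x w ^ 2) := by
        rw [heq]; ring
    _ ≤ (1 - α) ^ 2 * (δ * (1 - (n - δ) * x w ^ 2) + δ * (n - δ) * x w ^ 2) := by gcongr
    _ = δ * (1 - α) ^ 2 := by ring

theorem min_coord_sq_upper_bound {n : ℕ}
    (G : SimpleGraph (Fin n)) [DecidableRel G.Adj]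
    (α : ℝ) (h0 : 0 ≤ α) (h1 : α < 1)
    (hδ : 1 ≤ G.minDegree)
    (x : Fin n → ℝ) (hxnn : ∀ v, 0 ≤ x v) (hunit : ∑ v, x v ^ 2 = 1)
    (heig : (Aalpha G α).mulVec x = lamAlpha G α • x)
    (w : Fin n) (hw : ∀ v, x w ≤ x v) :
    x w ^ 2 ≤ (G.minDegree : ℝ) * (1 - α) ^ 2 /
      ((lamAlpha G α - α * (G.minDegree : ℝ)) ^ 2 +
        (G.minDegree : ℝ) * ((n : ℝ) - (G.minDegree : ℝ)) * (1 - α) ^ 2) :=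
  min_coord_sq_upper_bound_general G α h1 hδ x hxnn hunit heig w hw
end

section
/- Let r ≥ 2 and 0 ≤ α ≤ 1 - 1/r, and let n ≥ 1. Then λ_α(T_{n,r}) ≤ (1 - 1/r)·n, where T_{n,r} is the Turán graph and λ_α denotes the largest eigenvalue of A_α = α·D + (1-α)·A. -/
open Finset Matrix

/-!
Group the vertices into the `r` parts, of sizes `N i`, and for `x : V → ℝ` let `s i` and `t i`
be the sums of `x v` and `x v ^ 2` over part `i`. Then
`x ⬝ᵥ A_α x = α (n ∑ t - ∑ N t) + (1 - α) ((∑ s) ^ 2 - ∑ s ^ 2)`, and since `s i ^ 2 ≤ N i * t i`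
the Rayleigh bound `(1 - 1/r) n` reduces to `(1 - α) (∑ s) ^ 2 ≤ a ∑ t + ∑ s ^ 2` with
`a = (1 - 1/r - α) n ≥ 0`. This is Cauchy–Schwarz with weights `N i / (a + N i)`, whose sum is at
most `n / (a + n / r) = 1 / (1 - α)` by concavity of `x ↦ x / (a + x)`.
-/

section OrderedField

variable {K : Type*} [Field K] [LinearOrder K] [IsStrictOrderedRing K]

lemma div_add_le_tangent {q x m : K} (hq : 0 ≤ q) (hx : 0 ≤ x) (hm : 0 < m) :
    x / (q + x) ≤ m / (q + m) + q * (x - m) / (q + m) ^ 2 := by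
  have hqm : 0 < q + m := by linarith
  rcases (add_nonneg hq hx).eq_or_lt with h | h
  · rw [← h, div_zero]
    have hq0 : q = 0 := by linarith
    simp [hq0, div_nonneg hm.le hm.le]
  · rw [div_add_div _ _ hqm.ne' (by positivity), div_le_div_iff₀ h (by positivity)]
    nlinarith [mul_nonneg hq (sq_nonneg (x - m)), sq_nonneg (x - m)]

/-- Jensen's inequality for the concave function `x ↦ x / (q + x)`. -/
lemma sum_div_add_le {ι : Type*} [Fintype ι] {q : K} (hq : 0 ≤ q) {N : ι → K}
    (hN : ∀ i, 0 ≤ N i) (hpos : 0 < ∑ i, N i) :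
    ∑ i, N i / (q + N i) ≤ (∑ i, N i) / (q + (∑ i, N i) / Fintype.card ι) := by
  obtain ⟨i₀, -, -⟩ := exists_ne_zero_of_sum_ne_zero hpos.ne'
  have hcard : (Fintype.card ι : K) ≠ 0 :=
    Nat.cast_ne_zero.mpr (Fintype.card_pos_iff.mpr ⟨i₀⟩).ne'
  set m := (∑ i, N i) / Fintype.card ι
  have hm : 0 < m := by positivity
  have hcard_m : Fintype.card ι * m = ∑ i, N i := mul_div_cancel₀ _ hcard
  clear_value m
  calc ∑ i, N i / (q + N i) ≤ ∑ i, (m / (q + m) + q * (N i - m) / (q + m) ^ 2) :=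
        sum_le_sum fun i _ => div_add_le_tangent hq (hN i) hm
    _ = Fintype.card ι * m / (q + m) + q * (∑ i, N i - Fintype.card ι * m) / (q + m) ^ 2 := by
        rw [sum_add_distrib, ← sum_div, ← sum_div, ← mul_sum, sum_sub_distrib]
        simp only [sum_const, card_univ, nsmul_eq_mul]
    _ = (∑ i, N i) / (q + m) := by rw [hcard_m, sub_self, mul_zero, zero_div, add_zero]

lemma sq_sum_le_sum_div_add_mul_sum {ι : Type*} [Fintype ι] {a : K} (ha : 0 ≤ a)
    {N s t : ι → K} (hN : ∀ i, 0 ≤ N i) (ht : ∀ i, 0 ≤ t i)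
    (hst : ∀ i, s i ^ 2 ≤ N i * t i) :
    (∑ i, s i) ^ 2 ≤ (∑ i, N i / (a + N i)) * ∑ i, (a * t i + s i ^ 2) := by
  refine sum_sq_le_sum_mul_sum_of_sq_le_mul _
    (fun i _ => div_nonneg (hN i) (add_nonneg ha (hN i)))
    (fun i _ => add_nonneg (mul_nonneg ha (ht i)) (sq_nonneg _)) fun i _ => ?_
  rcases (add_nonneg ha (hN i)).eq_or_lt with h | h
  · have hN0 : N i = 0 := by linarith [hN i]
    simpa [hN0] using hst i
  · rw [div_mul_eq_mul_div, le_div_iff₀ h]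
    nlinarith [mul_le_mul_of_nonneg_left (hst i) ha]

lemma one_sub_mul_sq_sum_le {ι : Type*} [Fintype ι] {α : K} {N s t : ι → K}
    (hα : α ≤ 1 - 1 / Fintype.card ι) (hN : ∀ i, 0 ≤ N i) (ht : ∀ i, 0 ≤ t i)
    (hst : ∀ i, s i ^ 2 ≤ N i * t i) (hpos : 0 < ∑ i, N i) :
    (1 - α) * (∑ i, s i) ^ 2 ≤
      (1 - 1 / Fintype.card ι - α) * (∑ i, N i) * ∑ i, t i + ∑ i, s i ^ 2 := by
  set n := ∑ i, N i
  set r : K := (Fintype.card ι : K)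
  obtain ⟨i₀, -, -⟩ := exists_ne_zero_of_sum_ne_zero hpos.ne'
  have hr : 0 < r := Nat.cast_pos.mpr (Fintype.card_pos_iff.mpr ⟨i₀⟩)
  have hα' : 0 < 1 - α := by
    have : 0 < 1 / r := by positivity
    linarith
  set a := (1 - 1 / r - α) * n with ha_def
  have ha : 0 ≤ a := mul_nonneg (by linarith) hpos.le
  have hW : (1 - α) * ∑ i, N i / (a + N i) ≤ 1 := by
    calc (1 - α) * ∑ i, N i / (a + N i) ≤ (1 - α) * (n / (a + n / r)) :=
          mul_le_mul_of_nonneg_left (sum_div_add_le ha hN hpos) hα'.le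
      _ = 1 := by
          rw [show a + n / r = (1 - α) * n by rw [ha_def]; field_simp; ring]
          field_simp
  have hU : 0 ≤ ∑ i, (a * t i + s i ^ 2) :=
    sum_nonneg fun i _ => add_nonneg (mul_nonneg ha (ht i)) (sq_nonneg _)
  calc (1 - α) * (∑ i, s i) ^ 2
      ≤ (1 - α) * ((∑ i, N i / (a + N i)) * ∑ i, (a * t i + s i ^ 2)) :=
        mul_le_mul_of_nonneg_left (sq_sum_le_sum_div_add_mul_sum ha hN ht hst) hα'.le
    _ ≤ ∑ i, (a * t i + s i ^ 2) := by rw [← mul_assoc]; exact mul_le_of_le_one_left hU hW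
    _ = a * ∑ i, t i + ∑ i, s i ^ 2 := by rw [sum_add_distrib, ← mul_sum]

end OrderedField

lemma dotProduct_Aalpha_mulVec {V : Type*} [Fintype V] [DecidableEq V] (G : SimpleGraph V)
    [DecidableRel G.Adj] (α : ℝ) (x : V → ℝ) :
    x ⬝ᵥ (Aalpha G α *ᵥ x) =
      α * ∑ v, G.degree v * x v ^ 2 + (1 - α) * (x ⬝ᵥ (G.adjMatrix ℝ *ᵥ x)) := by
  simp only [Aalpha, add_mulVec, smul_mulVec, dotProduct_add, dotProduct_smul, smul_eq_mul]
  congr 2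
  simp only [dotProduct, mulVec_diagonal]
  exact sum_congr rfl fun v _ => by ring

lemma Finset.sum_mul_comp_eq_sum_fiberwise {V ι R : Type*} [Fintype V] [Fintype ι]
    [DecidableEq ι] [NonUnitalNonAssocSemiring R] (f : V → ι) (g : V → R) (h : ι → R) :
    ∑ v, g v * h (f v) = ∑ i, (∑ v with f v = i, g v) * h i := by
  rw [← sum_fiberwise univ f]
  refine sum_congr rfl fun i _ => ?_
  rw [sum_mul]
  exact sum_congr rfl fun v hv => by rw [(mem_filter.mp hv).2]

namespace SimpleGraph

variable {V ι : Type*} [Fintype V] [DecidableEq ι] {G : SimpleGraph V} [DecidableRel G.Adj]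
  {f : V → ι}

lemma neighborFinset_eq_filter_ne (hG : ∀ v w, G.Adj v w ↔ f v ≠ f w) (v : V) :
    G.neighborFinset v = ({w | ¬f w = f v} : Finset V) := by
  ext w
  simp [hG, eq_comm]

lemma degree_eq_card_sub_card_part (hG : ∀ v w, G.Adj v w ↔ f v ≠ f w) (v : V) :
    (G.degree v : ℝ) = Fintype.card V - #{w | f w = f v} := by
  rw [← G.card_neighborFinset_eq_degree, neighborFinset_eq_filter_ne hG, eq_sub_iff_add_eq,
    ← card_univ, add_comm]
  exact_mod_cast card_filter_add_card_filter_not _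

lemma sum_degree_mul_sq_eq [Fintype ι] (hG : ∀ v w, G.Adj v w ↔ f v ≠ f w) (x : V → ℝ) :
    ∑ v, G.degree v * x v ^ 2 =
      Fintype.card V * ∑ v, x v ^ 2 - ∑ i, (∑ v with f v = i, x v ^ 2) * #{v | f v = i} := by
  simp only [degree_eq_card_sub_card_part hG, ← sum_mul_comp_eq_sum_fiberwise, mul_sum,
    ← sum_sub_distrib]
  exact sum_congr rfl fun v _ => by ring

lemma dotProduct_adjMatrix_mulVec_eq [Fintype ι] (hG : ∀ v w, G.Adj v w ↔ f v ≠ f w)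
    (x : V → ℝ) :
    x ⬝ᵥ (G.adjMatrix ℝ *ᵥ x) = (∑ v, x v) ^ 2 - ∑ i, (∑ v with f v = i, x v) ^ 2 := by
  have hnbr (v : V) : ∑ u ∈ G.neighborFinset v, x u = ∑ u, x u - ∑ u with f u = f v, x u := by
    rw [neighborFinset_eq_filter_ne hG, eq_sub_iff_add_eq, add_comm,
      sum_filter_add_sum_filter_not]
  simp only [dotProduct, adjMatrix_mulVec_apply, hnbr, mul_sub, sum_sub_distrib, ← sum_mul, sq]
  rw [sum_mul_comp_eq_sum_fiberwise f x (fun i => ∑ u with f u = i, x u)]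

theorem dotProduct_Aalpha_mulVec_le [DecidableEq V] [Fintype ι] [Nonempty V]
    (hG : ∀ v w, G.Adj v w ↔ f v ≠ f w) {α : ℝ} (h0 : 0 ≤ α)
    (h1 : α ≤ 1 - 1 / Fintype.card ι) (x : V → ℝ) :
    x ⬝ᵥ (Aalpha G α *ᵥ x) ≤ (1 - 1 / Fintype.card ι) * Fintype.card V * (x ⬝ᵥ x) := by
  set N : ι → ℝ := fun i => #{v | f v = i}
  set s : ι → ℝ := fun i => ∑ v with f v = i, x v
  set t : ι → ℝ := fun i => ∑ v with f v = i, x v ^ 2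
  have hN (i : ι) : 0 ≤ N i := Nat.cast_nonneg _
  have ht (i : ι) : 0 ≤ t i := sum_nonneg fun v _ => sq_nonneg (x v)
  have hst (i : ι) : s i ^ 2 ≤ N i * t i := sq_sum_le_card_mul_sum_sq
  have hNsum : ∑ i, N i = Fintype.card V := by
    rw [← card_univ, card_eq_sum_card_fiberwise fun v _ => mem_univ (f v)]
    push_cast
    rfl
  have hT : ∑ i, t i = x ⬝ᵥ x := by simp only [t, sum_fiberwise, dotProduct, sq]
  have hS : ∑ i, s i = ∑ v, x v := sum_fiberwise _ _ _
  have hcore := one_sub_mul_sq_sum_le h1 hN ht hst (hNsum ▸ Nat.cast_pos.mpr Fintype.card_pos)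
  rw [hNsum, hT, hS] at hcore
  have hst_sum : α * ∑ i, s i ^ 2 ≤ α * ∑ i, t i * N i :=
    mul_le_mul_of_nonneg_left (sum_le_sum fun i _ => (hst i).trans_eq (mul_comm _ _)) h0
  have hsq : ∑ v, x v ^ 2 = x ⬝ᵥ x := by simp only [dotProduct, sq]
  rw [dotProduct_Aalpha_mulVec, sum_degree_mul_sq_eq hG, dotProduct_adjMatrix_mulVec_eq hG, hsq]
  linarith

end SimpleGraph

/-- `hc` is needed since `sSup ∅ = 0`. -/
lemma Matrix.sSup_spectrum_le_of_dotProduct_mulVec_le {V : Type*} [Fintype V] [DecidableEq V]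
    {M : Matrix V V ℝ} {c : ℝ} (hc : 0 ≤ c) (hM : ∀ x, x ⬝ᵥ (M *ᵥ x) ≤ c * (x ⬝ᵥ x)) :
    sSup (spectrum ℝ M) ≤ c := by
  refine Real.sSup_le (fun μ hμ => ?_) hc
  rw [← spectrum_toLin', ← Module.End.hasEigenvalue_iff_mem_spectrum] at hμ
  obtain ⟨x, hx⟩ := hμ.exists_hasEigenvector
  have hMx : M *ᵥ x = μ • x := by rw [← toLin'_apply, hx.apply_eq_smul]
  have hxx : 0 < x ⬝ᵥ x := by
    simpa using dotProduct_self_star_pos_iff.mpr hx.2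
  have := hM x
  rw [hMx, dotProduct_smul, smul_eq_mul] at this
  exact le_of_mul_le_mul_right this hxx

theorem lamAlpha_turanGraph_upper (r n : ℕ) (hr : 2 ≤ r) (hn : 1 ≤ n)
    (α : ℝ) (h0 : 0 ≤ α) (h1 : α ≤ 1 - 1 / r) :
    lamAlpha (SimpleGraph.turanGraph n r) α ≤ (1 - 1 / (r : ℝ)) * n := by
  have hr0 : 0 < r := by omega
  have : Nonempty (Fin n) := ⟨⟨0, hn⟩⟩
  let part : Fin n → Fin r := fun v => ⟨v % r, Nat.mod_lt _ hr0⟩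
  have hG (v w : Fin n) : (SimpleGraph.turanGraph n r).Adj v w ↔ part v ≠ part w := by
    simp [part, SimpleGraph.turanGraph_adj, Fin.ext_iff]
  have hc : 0 ≤ 1 - 1 / (r : ℝ) := by
    rw [sub_nonneg]; exact div_le_one_of_le₀ (by exact_mod_cast hr0) (by positivity)
  refine Matrix.sSup_spectrum_le_of_dotProduct_mulVec_le (mul_nonneg hc n.cast_nonneg) fun x => ?_
  simpa using SimpleGraph.dotProduct_Aalpha_mulVec_le hG h0 (by simpa using h1) x
end
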